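/- arXiv:1403.5089 — 2 statements merged into one kernel-verified Lean document; each statement's English description precedes it below -/
import Mathlib

section
/- Let K ≥ 2, k ∈ {2,…,K}, and let h_j, P_j > 0 for j = 2,…,K. The system of conditions η_k² ≤ h_k², Σ_{j=2, j≠k}^{K} h_j² ≤ 1 − ρ_k², and η_k ρ_k = 1 + Σ_{j=2, j≠k}^{K} h_j² P_j is satisfiable in (η_k, ρ_k) with ρ_k ∈ (0,1] if and only if Σ_{j=2, j≠k}^{K} h_j² < 1 and h_k² ≥ (1 + Σ_{j=2, j≠k}^{K} h_j² P_j)² / (1 − Σ_{j=2, j≠k}^{K} h_j²). -/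
/-- Combination of the useful-genie and smart-genie conditions in Theorem 4 for the
K×K Gaussian many-to-one X channel (strategy M2 between transmitters 1 and k). -/
theorem stmt_10 (K k : ℕ) (hK : 2 ≤ K) (hk2 : 2 ≤ k) (hkK : k ≤ K) (h P : ℕ → ℝ)
    (hh : ∀ j ∈ Finset.Icc 2 K, 0 < h j) (hP : ∀ j ∈ Finset.Icc 2 K, 0 < P j) :
    (∃ η ρ : ℝ, 0 < ρ ∧ ρ ≤ 1 ∧ η^2 ≤ (h k)^2 ∧
        (∑ j ∈ (Finset.Icc 2 K).erase k, (h j)^2) ≤ 1 - ρ^2 ∧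
        η * ρ = 1 + ∑ j ∈ (Finset.Icc 2 K).erase k, (h j)^2 * P j) ↔
    ((∑ j ∈ (Finset.Icc 2 K).erase k, (h j)^2) < 1 ∧
      (h k)^2 ≥ (1 + ∑ j ∈ (Finset.Icc 2 K).erase k, (h j)^2 * P j)^2 /
        (1 - ∑ j ∈ (Finset.Icc 2 K).erase k, (h j)^2)) := by
  set s := (Finset.Icc 2 K).erase k with hs
  have hS0 : 0 ≤ ∑ j ∈ s, (h j)^2 := Finset.sum_nonneg fun j _ => sq_nonneg _
  have hT0 : 0 < 1 + ∑ j ∈ s, (h j)^2 * P j := by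
    have : 0 ≤ ∑ j ∈ s, (h j)^2 * P j := Finset.sum_nonneg fun j hj =>
      mul_nonneg (sq_nonneg _) (hP j (Finset.mem_of_mem_erase hj)).le
    linarith
  set S := ∑ j ∈ s, (h j)^2 with hSdef
  set T := 1 + ∑ j ∈ s, (h j)^2 * P j with hTdef
  constructor
  · rintro ⟨η, ρ, hρ0, hρ1, hη, hSρ, hηρ⟩
    have hρ2 : 0 < ρ^2 := by positivity
    have hS1 : S < 1 := by nlinarith
    refine ⟨hS1, ?_⟩
    have hρ2le : ρ^2 ≤ 1 - S := by linarith
    rw [ge_iff_le, div_le_iff₀ (by linarith)]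
    have hT2 : T^2 = η^2 * ρ^2 := by rw [← hηρ]; ring
    nlinarith [sq_nonneg η]
  · rintro ⟨hS1, hhk⟩
    have h1S : 0 < 1 - S := by linarith
    have hsq : Real.sqrt (1 - S) ^ 2 = 1 - S := Real.sq_sqrt h1S.le
    have hsqpos : 0 < Real.sqrt (1 - S) := Real.sqrt_pos.mpr h1S
    refine ⟨T / Real.sqrt (1 - S), Real.sqrt (1 - S), hsqpos, ?_, ?_, ?_, ?_⟩
    · have := Real.sqrt_le_sqrt (show (1:ℝ) - S ≤ 1 by linarith)
      simpa using this
    · rw [div_pow, hsq]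
      exact hhk
    · rw [hsq]; linarith
    · exact div_mul_cancel₀ T hsqpos.ne'
end

section
/- Let σ₁, σ_i > 0, h_i real with h_i²σ_i² ≤ σ₁². Let X be a real random variable with E[X²] ≤ P, and let N_i ~ N(0, σ_i²), N₁ ~ N(0, σ₁²) be independent of X. Then for any (measurable) random variable W with W → X → (noise channels) Markov structure, I(W ; X + N_i) ≥ I(W ; h_i X + N₁). Equivalently, h_i X + N₁ is a stochastically degraded version of X + N_i. -/
open MeasureTheory ProbabilityTheory
open scoped NNReal

/-!
Gaussian laws are stable under convolution, with variances adding up. Hence the noise `N₁` of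
variance `σ₁²` splits into `h Nᵢ`, of variance `h²σᵢ²`, plus an independent Gaussian of variance
`σ₁² - h²σᵢ² ≥ 0`, and by associativity of convolution `hX + N₁` has the law of `h(X + Nᵢ)`
corrupted by that extra noise.
-/

lemma MeasureTheory.Measure.conv_gaussianReal_add (μ : Measure ℝ) (m₁ m₂ : ℝ) (v₁ v₂ : ℝ≥0) :
    μ ∗ gaussianReal (m₁ + m₂) (v₁ + v₂) = (μ ∗ gaussianReal m₁ v₁) ∗ gaussianReal m₂ v₂ := by
  rw [Measure.conv_assoc, gaussianReal_conv_gaussianReal]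

lemma ProbabilityTheory.IndepFun.map_add_eq_map_conv_gaussianReal {Ω : Type*} [MeasurableSpace Ω]
    {P : Measure Ω} [IsFiniteMeasure P] {Y N : Ω → ℝ} {m : ℝ} {v : ℝ≥0}
    (hY : Measurable Y) (hN : Measurable N) (hYN : IndepFun Y N P)
    (hN_law : P.map N = gaussianReal m v) :
    P.map (fun ω ↦ Y ω + N ω) = P.map Y ∗ gaussianReal m v := by
  rw [← hN_law]
  exact hYN.map_add_eq_map_conv_map hY hN

theorem stmt_15_general {Ω : Type*} [MeasureSpace Ω] [IsProbabilityMeasure (ℙ : Measure Ω)]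
    (h σ1 σi : ℝ) (hdeg : h^2 * σi^2 ≤ σ1^2)
    (X Ni N1 : Ω → ℝ) (hX : Measurable X) (hNi : Measurable Ni) (hN1 : Measurable N1)
    (hNid : Measure.map Ni ℙ = gaussianReal 0 ⟨σi^2, sq_nonneg σi⟩)
    (hN1d : Measure.map N1 ℙ = gaussianReal 0 ⟨σ1^2, sq_nonneg σ1⟩)
    (hind1 : IndepFun X Ni ℙ)
    (hind2 : IndepFun (fun ω => (X ω, Ni ω)) N1 ℙ) :
    Measure.map (fun ω => h * X ω + N1 ω) ℙ =
      Measure.map (fun p : ℝ × ℝ => p.1 + p.2)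
        ((Measure.map (fun ω => h * (X ω + Ni ω)) ℙ).prod
          (gaussianReal 0 (Real.toNNReal (σ1^2 - h^2*σi^2)))) := by
  have hvar : (⟨h^2, sq_nonneg h⟩ * ⟨σi^2, sq_nonneg σi⟩ : ℝ≥0)
      + Real.toNNReal (σ1^2 - h^2*σi^2) = ⟨σ1^2, sq_nonneg σ1⟩ := by
    ext
    rw [NNReal.coe_add, Real.coe_toNNReal _ (sub_nonneg.2 hdeg)]
    exact add_sub_cancel _ _
  have hhNi : Measure.map (fun ω => h * Ni ω) ℙ
      = gaussianReal 0 (⟨h^2, sq_nonneg h⟩ * ⟨σi^2, sq_nonneg σi⟩) := by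
    rw [← Function.comp_def, ← Measure.map_map (measurable_const_mul h) hNi, hNid,
      gaussianReal_map_const_mul (v := (⟨σi^2, sq_nonneg σi⟩ : ℝ≥0)), mul_zero]
    rfl
  have hlaw_i : Measure.map (fun ω => h * (X ω + Ni ω)) ℙ
      = Measure.map (fun ω => h * X ω) ℙ
          ∗ gaussianReal 0 (⟨h^2, sq_nonneg h⟩ * ⟨σi^2, sq_nonneg σi⟩) := by
    simp_rw [mul_add]
    exact (hind1.comp (measurable_const_mul h) (measurable_const_mul h)
      ).map_add_eq_map_conv_gaussianReal (hX.const_mul h) (hNi.const_mul h) hhNi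
  have hlaw_1 : Measure.map (fun ω => h * X ω + N1 ω) ℙ
      = Measure.map (fun ω => h * X ω) ℙ ∗ gaussianReal 0 ⟨σ1^2, sq_nonneg σ1⟩ :=
    ((hind2.comp measurable_fst measurable_id).comp (measurable_const_mul h)
      measurable_id).map_add_eq_map_conv_gaussianReal (hX.const_mul h) hN1 hN1d
  change _ = Measure.map (fun ω => h * (X ω + Ni ω)) ℙ ∗ _
  rw [hlaw_1, hlaw_i, ← Measure.conv_gaussianReal_add, add_zero, hvar]

/-- Lemma 1 of the paper (degradedness of the many-to-one X channel): if
h²σᵢ² ≤ σ₁², then h·X + N₁ is a stochastically degraded version of X + Nᵢ, i.e.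
the law of h·X + N₁ coincides with the law of h·(X + Nᵢ) further corrupted by an
independent Gaussian noise of variance σ₁² - h²σᵢ².  (By the data processing
inequality this yields I(W ; X+Nᵢ) ≥ I(W ; hX+N₁) for any W → X Markov input.) -/
theorem stmt_15 {Ω : Type*} [MeasureSpace Ω] [IsProbabilityMeasure (ℙ : Measure Ω)]
    (h σ1 σi Pw : ℝ) (hσ1 : 0 < σ1) (hσi : 0 < σi) (hdeg : h^2 * σi^2 ≤ σ1^2)
    (X Ni N1 : Ω → ℝ) (hX : Measurable X) (hNi : Measurable Ni) (hN1 : Measurable N1)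
    (hX2 : ∫ ω, (X ω)^2 ≤ Pw)
    (hNid : Measure.map Ni ℙ = gaussianReal 0 ⟨σi^2, sq_nonneg σi⟩)
    (hN1d : Measure.map N1 ℙ = gaussianReal 0 ⟨σ1^2, sq_nonneg σ1⟩)
    (hind1 : IndepFun X Ni ℙ)
    (hind2 : IndepFun (fun ω => (X ω, Ni ω)) N1 ℙ) :
    Measure.map (fun ω => h * X ω + N1 ω) ℙ =
      Measure.map (fun p : ℝ × ℝ => p.1 + p.2)
        ((Measure.map (fun ω => h * (X ω + Ni ω)) ℙ).prod
          (gaussianReal 0 (Real.toNNReal (σ1^2 - h^2*σi^2)))) :=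
  stmt_15_general h σ1 σi hdeg X Ni N1 hX hNi hN1 hNid hN1d hind1 hind2
end
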